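/- For γ ∈ (0,1) and integers 1 ≤ k ≤ R ≤ Q, the normalized expected latency μ·E[L_k] = (Σ_{i=0}^{k-1} 1/(R−i))/(1 − γR/Q) satisfies μ·E[L_k] ≥ (Σ_{i=0}^{k-1} 1/(Q−i))/(1−γ) when R = Q, and the choice R = Q is optimal in the limit γ → 0⁺ (i.e., for every R < Q there exists γ₀ > 0 such that for all γ < γ₀ the value at R = Q is strictly smaller than at R). -/

import Mathlib

open Set Finset

/-! For `R < Q` every term `1 / (R - i)` exceeds `1 / (Q - i)`, so the sums
`S_R = Σ_{i<k} 1 / (R - i)` satisfy `S_Q < S_R`. At `R = Q` the latency is exactly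
`S_Q / (1 - γ)`, which stays below `S_R` as long as `γ < 1 - S_Q / S_R`; and the latency
at `R` is never below `S_R`, since its denominator `1 - γ R / Q` lies in `(0, 1]`. -/

lemma cast_lt_of_mem_range_of_le {k i : ℕ} {x : ℝ} (hi : i ∈ range k) (hx : (k : ℝ) ≤ x) :
    (i : ℝ) < x :=
  (Nat.cast_lt.2 (mem_range.1 hi)).trans_le hx

lemma sum_range_one_div_sub_pos {k : ℕ} {x : ℝ} (hk : 0 < k) (hx : (k : ℝ) ≤ x) :
    0 < ∑ i ∈ range k, 1 / (x - i) :=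
  sum_pos (fun _ hi => one_div_pos.2 (sub_pos.2 (cast_lt_of_mem_range_of_le hi hx)))
    (nonempty_range_iff.2 hk.ne')

lemma sum_range_one_div_sub_lt_of_lt {k : ℕ} {x y : ℝ} (hk : 0 < k) (hx : (k : ℝ) ≤ x)
    (hxy : x < y) : ∑ i ∈ range k, 1 / (y - i) < ∑ i ∈ range k, 1 / (x - i) :=
  sum_lt_sum_of_nonempty (nonempty_range_iff.2 hk.ne') fun _ hi =>
    one_div_lt_one_div_of_lt (sub_pos.2 (cast_lt_of_mem_range_of_le hi hx)) (by linarith)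

lemma div_one_sub_lt_of_lt_one_sub_div {a b γ : ℝ} (ha : 0 ≤ a) (hb : 0 < b)
    (hγ : γ < 1 - a / b) : a / (1 - γ) < b := by
  have hab : a / b < 1 - γ := by linarith
  have hγ1 : 0 < 1 - γ := (div_nonneg ha hb.le).trans_lt hab
  rw [div_lt_iff₀ hγ1, ← div_lt_iff₀' hb]
  exact hab

/-- Let `μ·E[L_k](R,γ) = (Σ_{i=0}^{k-1} 1/(R−i))/(1 − γR/Q)` be the normalized expected
`k`-OutOf-`Q` latency with replication factor `R` and load `γ ∈ (0,1)`. At `R = Q` the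
normalized latency is at least `(Σ_{i=0}^{k-1} 1/(Q−i))/(1−γ)`, and the choice `R = Q`
is optimal in the limit `γ → 0⁺`: for every `R < Q` (with `k ≤ R`) there exists
`γ₀ > 0` such that for all `0 < γ < γ₀` the latency at `R = Q` is strictly smaller than
at `R`. -/
theorem full_replication_optimal_at_low_load (k Q : ℕ) (hk : 1 ≤ k) (hkQ : k ≤ Q) :
    let g : ℕ → ℝ → ℝ := fun R γ =>
      (∑ i ∈ Finset.range k, 1 / ((R : ℝ) - i)) / (1 - γ * R / Q)
    (∀ γ ∈ Ioo (0 : ℝ) 1,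
        g Q γ ≥ (∑ i ∈ Finset.range k, 1 / ((Q : ℝ) - i)) / (1 - γ)) ∧
      ∀ R : ℕ, k ≤ R → R < Q →
        ∃ γ₀ > (0 : ℝ), ∀ γ : ℝ, 0 < γ → γ < γ₀ → g Q γ < g R γ := by
  intro g
  have hQ : (0 : ℝ) < Q := by exact_mod_cast hk.trans hkQ
  have hgQ : ∀ γ, g Q γ = (∑ i ∈ range k, 1 / ((Q : ℝ) - i)) / (1 - γ) := fun γ => by
    simp only [g, mul_div_assoc, div_self hQ.ne', mul_one]
  refine ⟨fun γ _ => (hgQ γ).ge, fun R hkR hRQ => ?_⟩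
  have hkR' : (k : ℝ) ≤ R := by exact_mod_cast hkR
  have hRQ' : (R : ℝ) < Q := by exact_mod_cast hRQ
  have hSQ := sum_range_one_div_sub_pos hk (hkR'.trans hRQ'.le)
  have hSR := sum_range_one_div_sub_pos hk hkR'
  have hSQR := sum_range_one_div_sub_lt_of_lt hk hkR' hRQ'
  refine ⟨_, sub_pos.2 ((div_lt_one hSR).2 hSQR), fun γ hγ0 hγ => ?_⟩
  have hγ1 : γ ≤ 1 := by linarith [div_pos hSQ hSR]
  have hload0 : 0 ≤ γ * R / Q := div_nonneg (mul_nonneg hγ0.le R.cast_nonneg) hQ.le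
  have hload1 : γ * R / Q < 1 := by
    rw [div_lt_one hQ]
    exact (mul_le_of_le_one_left (Nat.cast_nonneg R) hγ1).trans_lt hRQ'
  calc g Q γ = _ := hgQ γ
    _ < _ := div_one_sub_lt_of_lt_one_sub_div hSQ.le hSR hγ
    _ ≤ g R γ := le_div_self hSR.le (by linarith) (by linarith)
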